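/- arXiv:math/0307288 — 2 statements merged into one kernel-verified Lean document; each statement's English description precedes it below -/
import Mathlib

section
/- Let v_0, ..., v_k be points in ℝ^n whose convex hull contains the origin in its interior. Then the integral ∫_{ℝ^n} 1/(∑_{i=0}^k e^{⟨v_i, y⟩}) dy is finite. -/
/-!
If `0` is interior to the convex hull of the `v i`, a ball `B(0, ε)` lies in the hull, so for
every `y` some vertex satisfies `⟪v i, y⟫ ≥ (ε / 2) ‖y‖` (a linear functional attains its maximum
over a convex hull at a generating point). Hence the integrand is at most `exp (-(ε / 2) ‖y‖)`,
which is integrable since it decays faster than any power `(1 + ‖y‖) ^ (-m)`.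
-/

open MeasureTheory Real Module

section

variable {E : Type*} [NormedAddCommGroup E] [InnerProductSpace ℝ E]

lemma exists_inner_le_of_mem_convexHull {s : Set E} {x : E} (hx : x ∈ convexHull ℝ s) (y : E) :
    ∃ z ∈ s, inner ℝ x y ≤ inner ℝ z y := by
  simpa only [ContinuousLinearMap.coe_coe, innerSL_apply_apply, real_inner_comm y] using
    ((innerSL ℝ y).toLinearMap.convexOn convex_univ).exists_ge_of_mem_convexHull
      (Set.subset_univ s) hx

lemma exists_pos_mul_norm_le_inner_of_zero_mem_interior_convexHull {s : Set E}
    (hs : (0 : E) ∈ interior (convexHull ℝ s)) :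
    ∃ c > 0, ∀ y : E, ∃ z ∈ s, c * ‖y‖ ≤ inner ℝ z y := by
  obtain ⟨ε, hε, hball⟩ := Metric.isOpen_iff.mp isOpen_interior 0 hs
  refine ⟨ε / 2, half_pos hε, fun y => ?_⟩
  have hx : (ε / 2 * ‖y‖⁻¹) • y ∈ convexHull ℝ s := by
    refine interior_subset (hball ?_)
    rw [mem_ball_zero_iff, norm_smul, norm_of_nonneg (by positivity), mul_assoc]
    nlinarith [inv_mul_le_one (a := ‖y‖)]
  obtain ⟨z, hz, hle⟩ := exists_inner_le_of_mem_convexHull hx y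
  refine ⟨z, hz, ?_⟩
  rwa [real_inner_smul_left, real_inner_self_eq_norm_sq, mul_assoc, sq, ← mul_assoc ‖y‖⁻¹,
    inv_mul_mul_self] at hle

end

lemma exp_neg_mul_le_mul_one_add_rpow_neg {c r : ℝ} (hc : 0 < c) (hr : 0 ≤ r) (m : ℕ) :
    exp (-(c * r)) ≤ exp c * m.factorial / c ^ m * (1 + r) ^ (-(m : ℝ)) := by
  have hpow : (c * (1 + r)) ^ m / m.factorial ≤ exp (c * (1 + r)) :=
    pow_div_factorial_le_exp _ (by positivity) m
  rw [rpow_neg (by positivity), rpow_natCast]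
  calc exp (-(c * r)) = exp c / exp (c * (1 + r)) := by
        rw [← exp_sub]; ring_nf
    _ ≤ exp c / ((c * (1 + r)) ^ m / m.factorial) := by gcongr
    _ = exp c * m.factorial / c ^ m * ((1 + r) ^ m)⁻¹ := by
        rw [mul_pow]; field_simp

lemma integrable_exp_neg_mul_norm {E : Type*} [NormedAddCommGroup E] [NormedSpace ℝ E]
    [FiniteDimensional ℝ E] [MeasurableSpace E] [BorelSpace E] (μ : Measure E)
    [μ.IsAddHaarMeasure] {c : ℝ} (hc : 0 < c) :
    Integrable (fun y : E => exp (-(c * ‖y‖))) μ := by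
  set m := finrank ℝ E + 1
  have hdim : (finrank ℝ E : ℝ) < m := by simp [m]
  refine ((integrable_one_add_norm hdim).const_mul (exp c * m.factorial / c ^ m)).mono'
    (by fun_prop) ?_
  filter_upwards with y
  rw [norm_of_nonneg (exp_pos _).le]
  exact exp_neg_mul_le_mul_one_add_rpow_neg hc (norm_nonneg y) _

theorem stmt_0 {n k : ℕ} (v : Fin (k + 1) → EuclideanSpace ℝ (Fin n))
    (h0 : (0 : EuclideanSpace ℝ (Fin n)) ∈ interior (convexHull ℝ (Set.range v))) :
    Integrable (fun y : EuclideanSpace ℝ (Fin n) =>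
      (∑ i, Real.exp (inner ℝ (v i) y : ℝ))⁻¹) := by
  obtain ⟨c, hc, hv⟩ := exists_pos_mul_norm_le_inner_of_zero_mem_interior_convexHull h0
  refine (integrable_exp_neg_mul_norm volume hc).mono' (by fun_prop) ?_
  filter_upwards with y
  obtain ⟨_, ⟨i, rfl⟩, hi⟩ := hv y
  have hsum : exp (c * ‖y‖) ≤ ∑ j, exp (inner ℝ (v j) y) :=
    (exp_le_exp.mpr hi).trans <| Finset.single_le_sum (f := fun j => exp (inner ℝ (v j) y))
      (fun j _ => (exp_pos _).le) (Finset.mem_univ i)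
  rw [norm_inv, norm_of_nonneg (hsum.trans' (exp_pos _).le), exp_neg]
  exact inv_anti₀ (exp_pos _) hsum
end

section
/- Let v_0,...,v_k ∈ ℝ^n whose convex hull contains 0 in its interior, let v ∈ ℝ^n, and suppose α ∈ (0,1) is such that (-α/(1-α))·v does NOT lie in the closed convex hull Σ of the v_i. Then ∫_{ℝ^n} e^{-α⟨v,y⟩}/(∑_i e^{⟨v_i,y⟩})^{1-α} dy = +∞. -/
/-!
Write `β = 1 - α` and `w = -(α / β) • u`. The integrand equals `(∑ i, exp ⟪v i - w, y⟫)^(-β)`.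
Since `w` lies outside the compact convex hull of the `v i`, separation gives a direction `y₀`
with `⟪v i - w, y₀⟫ ≤ -1` for all `i`; on the unit ball around `s • y₀` the integrand is then
at least `(k + 1)^(-β) · exp (β (s - C))` with `C = ∑ i, ‖v i - w‖`, which is unbounded as
`s → ∞`, while these balls all have the same positive volume.
-/

open MeasureTheory Filter Metric
open scoped RealInnerProductSpace ENNReal Topology

section InnerProductSpace

variable {E : Type*} [NormedAddCommGroup E] [InnerProductSpace ℝ E]

theorem exists_forall_inner_sub_le_neg_one [CompleteSpace E] {s : Set E} (hs : Convex ℝ s)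
    (hsc : IsClosed s) {w : E} (hw : w ∉ s) : ∃ y₀ : E, ∀ x ∈ s, ⟪x - w, y₀⟫ ≤ -1 := by
  obtain ⟨f, c, hfs, hcw⟩ := geometric_hahn_banach_closed_point hs hsc hw
  set δ := f w - c
  have hδ : 0 < δ := sub_pos.2 hcw
  refine ⟨δ⁻¹ • (InnerProductSpace.toDual ℝ E).symm f, fun x hx => ?_⟩
  rw [real_inner_smul_right, real_inner_comm, InnerProductSpace.toDual_symm_apply, map_sub,
    inv_mul_le_iff₀ hδ]
  linarith [hfs x hx]

theorem real_inner_le_of_mem_ball {a x y : E} {r : ℝ} (hy : y ∈ ball x r) :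
    ⟪a, y⟫ ≤ ⟪a, x⟫ + ‖a‖ * r := by
  have hyx : ‖y - x‖ < r := by rwa [← dist_eq_norm]
  calc ⟪a, y⟫ = ⟪a, x⟫ + ⟪a, y - x⟫ := by rw [← inner_add_right, add_sub_cancel]
    _ ≤ ⟪a, x⟫ + ‖a‖ * ‖y - x‖ := by gcongr; exact real_inner_le_norm _ _
    _ ≤ ⟪a, x⟫ + ‖a‖ * r := by gcongr

end InnerProductSpace

theorem Real.exp_mul_div_sum_exp_rpow {ι : Type*} (S : Finset ι) (a β : ℝ) (b : ι → ℝ) :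
    Real.exp (β * a) / (∑ i ∈ S, Real.exp (b i)) ^ β =
      (∑ i ∈ S, Real.exp (b i - a)) ^ (-β) := by
  have hsum : ∑ i ∈ S, Real.exp (b i - a) = Real.exp (-a) * ∑ i ∈ S, Real.exp (b i) := by
    simp only [Finset.mul_sum, ← Real.exp_add, neg_add_eq_sub]
  rw [hsum, Real.mul_rpow (Real.exp_pos _).le (Finset.sum_nonneg fun i _ => (Real.exp_pos _).le),
    ← Real.exp_mul, Real.rpow_neg (Finset.sum_nonneg fun i _ => (Real.exp_pos _).le),
    neg_mul_neg, mul_comm a, div_eq_mul_inv]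

theorem Real.card_rpow_neg_mul_exp_le_sum_exp_rpow {ι : Type*} [Fintype ι] [Nonempty ι]
    {a : ι → ℝ} {t β : ℝ} (hβ : 0 ≤ β) (ha : ∀ i, a i ≤ -t) :
    (Fintype.card ι : ℝ) ^ (-β) * Real.exp (β * t) ≤ (∑ i, Real.exp (a i)) ^ (-β) := by
  have hsum : ∑ i, Real.exp (a i) ≤ Fintype.card ι * Real.exp (-t) := by
    simpa using Finset.sum_le_sum fun i (_ : i ∈ Finset.univ) => Real.exp_le_exp.2 (ha i)
  calc (Fintype.card ι : ℝ) ^ (-β) * Real.exp (β * t)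
      = (Fintype.card ι * Real.exp (-t)) ^ (-β) := by
        rw [Real.mul_rpow (Nat.cast_nonneg _) (Real.exp_pos _).le, ← Real.exp_mul, neg_mul_neg,
          mul_comm t]
    _ ≤ (∑ i, Real.exp (a i)) ^ (-β) :=
        Real.rpow_le_rpow_of_nonpos (Finset.sum_pos (fun i _ => Real.exp_pos _)
          Finset.univ_nonempty) hsum (neg_nonpos.2 hβ)

theorem MeasureTheory.lintegral_eq_top_of_tendsto_of_forall_mem_ball {E ι : Type*}
    [NormedAddCommGroup E] [MeasurableSpace E] [BorelSpace E] (μ : Measure E)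
    [μ.IsAddHaarMeasure] {f : E → ℝ≥0∞} {l : Filter ι} [l.NeBot] {x : ι → E} {b : ι → ℝ≥0∞}
    {r : ℝ} (hr : 0 < r) (hb : Tendsto b l (𝓝 ⊤)) (hf : ∀ᶠ i in l, ∀ y ∈ ball (x i) r, b i ≤ f y) :
    ∫⁻ y, f y ∂μ = ⊤ := by
  have hV : μ (ball 0 r) ≠ 0 := (measure_ball_pos μ 0 hr).ne'
  have hlower : ∀ᶠ i in l, b i * μ (ball 0 r) ≤ ∫⁻ y, f y ∂μ := by
    filter_upwards [hf] with i hfi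
    calc b i * μ (ball 0 r) = ∫⁻ _ in ball (x i) r, b i ∂μ := by
          rw [setLIntegral_const, Measure.addHaar_ball_center μ (x i)]
      _ ≤ ∫⁻ y in ball (x i) r, f y ∂μ :=
          setLIntegral_mono' measurableSet_ball hfi
      _ ≤ ∫⁻ y, f y ∂μ := setLIntegral_le_lintegral _ _
  have htend : Tendsto (fun i => b i * μ (ball 0 r)) l (𝓝 ⊤) := by
    simpa only [ENNReal.top_mul hV] using
      ENNReal.Tendsto.mul_const (b := μ (ball 0 r)) hb (.inl ENNReal.top_ne_zero)
  exact eq_top_iff.2 (le_of_tendsto htend hlower)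

theorem stmt_11_general {n k : ℕ} (v : Fin (k + 1) → EuclideanSpace ℝ (Fin n))
    (u : EuclideanSpace ℝ (Fin n)) (α : ℝ) (hα : α ∈ Set.Ioo (0 : ℝ) 1)
    (hout : (-(α / (1 - α))) • u ∉ convexHull ℝ (Set.range v)) :
    ∫⁻ y : EuclideanSpace ℝ (Fin n),
        ENNReal.ofReal (Real.exp (-α * (inner ℝ u y : ℝ)) /
          (∑ i, Real.exp (inner ℝ (v i) y : ℝ)) ^ (1 - α)) = ⊤ := by
  set β := 1 - α
  have hβ : 0 < β := sub_pos.2 hα.2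
  set w := (-(α / β)) • u
  obtain ⟨y₀, hy₀⟩ := exists_forall_inner_sub_le_neg_one (convex_convexHull ℝ _)
    ((Set.finite_range v).isCompact_convexHull ℝ).isClosed hout
  set C := ∑ i, ‖v i - w‖
  have hinner : ∀ s : ℝ, 0 ≤ s → ∀ y ∈ ball (s • y₀) 1, ∀ i, ⟪v i - w, y⟫ ≤ -(s - C) :=
    fun s hs y hy i =>
    calc ⟪v i - w, y⟫ ≤ s * ⟪v i - w, y₀⟫ + ‖v i - w‖ := by
          simpa [real_inner_smul_right] using real_inner_le_of_mem_ball (a := v i - w) hy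
      _ ≤ s * (-1) + C := by
          gcongr
          · exact hy₀ _ (subset_convexHull ℝ _ (Set.mem_range_self i))
          · exact Finset.single_le_sum (f := fun j => ‖v j - w‖) (fun j _ => norm_nonneg _)
              (Finset.mem_univ i)
      _ = -(s - C) := by ring
  refine lintegral_eq_top_of_tendsto_of_forall_mem_ball volume one_pos
    (l := atTop) (x := fun s : ℝ => s • y₀)
    (b := fun s => ENNReal.ofReal ((k + 1 : ℝ) ^ (-β) * Real.exp (β * (s - C)))) ?_ ?_
  · exact ENNReal.tendsto_ofReal_atTop.comp <| Tendsto.const_mul_atTop (by positivity) <|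
      Real.tendsto_exp_atTop.comp <| (tendsto_atTop_add_const_right _ _ tendsto_id).const_mul_atTop hβ
  · filter_upwards [eventually_ge_atTop 0] with s hs y hy
    gcongr
    have hu : -α * ⟪u, y⟫ = β * ⟪w, y⟫ := by
      rw [real_inner_smul_left]; field_simp
    rw [hu, Real.exp_mul_div_sum_exp_rpow]
    simp only [← inner_sub_left]
    simpa using Real.card_rpow_neg_mul_exp_le_sum_exp_rpow hβ.le (hinner s hs y hy)

theorem stmt_11 {n k : ℕ} (v : Fin (k + 1) → EuclideanSpace ℝ (Fin n))
    (h0 : (0 : EuclideanSpace ℝ (Fin n)) ∈ interior (convexHull ℝ (Set.range v)))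
    (u : EuclideanSpace ℝ (Fin n)) (α : ℝ) (hα : α ∈ Set.Ioo (0 : ℝ) 1)
    (hout : (-(α / (1 - α))) • u ∉ convexHull ℝ (Set.range v)) :
    ∫⁻ y : EuclideanSpace ℝ (Fin n),
        ENNReal.ofReal (Real.exp (-α * (inner ℝ u y : ℝ)) /
          (∑ i, Real.exp (inner ℝ (v i) y : ℝ)) ^ (1 - α)) = ⊤ :=
  stmt_11_general v u α hα hout
end
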